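/- Mittag-Leffler characterization of the vanishing of lim¹ for inverse sequences of countable abelian groups (Remark 7, used via [EG3, Proposition 1.2] in the proof of Lemma 8): let (A_n)_{n∈ℕ} be abelian groups with transition homomorphisms f_n : A_{n+1} → A_n, and suppose every A_n is countable. Then the homomorphism d : ∏_{n∈ℕ} A_n → ∏_{n∈ℕ} A_n defined by d((a_n)_n) = (a_n − f_n(a_{n+1}))_n is surjective (equivalently, lim¹ of the system, defined as the cokernel of d, vanishes) if and only if the system satisfies the Mittag-Leffler condition: for every n there exists m ≥ n such that for all k ≥ m the image of the composite transition homomorphism A_k → A_n equals the image of A_m → A_n. -/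
import Mathlib


/-- The composite transition homomorphism `A (n + k) →+ A n` of an inverse sequence of
abelian groups with bonding maps `f n : A (n+1) →+ A n` (the identity when `k = 0`). -/
def InverseSystem.transition (A : ℕ → Type*) [∀ n, AddCommGroup (A n)]
    (f : ∀ n, A (n + 1) →+ A n) : ∀ n k, A (n + k) →+ A n
  | _, 0 => AddMonoidHom.id _
  | n, k + 1 => (InverseSystem.transition A f n k).comp (f (n + k))

namespace Lim1MLAux

variable {A : ℕ → Type} [∀ n, AddCommGroup (A n)] (f : ∀ n, A (n + 1) →+ A n)

local notation "T" => InverseSystem.transition A f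

lemma cast_f {p q : ℕ} (h : p = q) (z : A (p+1)) :
    f q (cast (congrArg A (congrArg Nat.succ h)) z) = cast (congrArg A h) (f p z) := by
  subst h; rfl

omit [∀ n, AddCommGroup (A n)] in
lemma cast_pi (b : ∀ m, A m) {p q : ℕ} (h : p = q) :
    cast (congrArg A h) (b p) = b q := by subst h; rfl

omit [∀ n, AddCommGroup (A n)] in
lemma cast_symm_cast {p q : ℕ} (h : p = q) (z : A q) :
    cast (congrArg A h) (cast (congrArg A h.symm) z) = z := by subst h; rfl

lemma range_le (n : ℕ) : ∀ k l, (T n (k+l)).range ≤ (T n k).range := by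
  intro k l
  induction l with
  | zero => exact le_rfl
  | succ l ih =>
    intro x hx
    obtain ⟨z, rfl⟩ := hx
    exact ih ⟨f (n+(k+l)) z, rfl⟩

lemma range_le' (n : ℕ) {k k' : ℕ} (h : k ≤ k') : (T n k').range ≤ (T n k).range := by
  obtain ⟨l, rfl⟩ := Nat.exists_eq_add_of_le h
  exact range_le f n k l

lemma transition_front (n : ℕ) : ∀ (k : ℕ) (h : n+1+k = n+(k+1)) (z : A (n+1+k)),
    T n (k+1) (cast (congrArg A h) z) = f n (T (n+1) k z)
  | 0, h, z => by
    show f (n+0) (cast _ z) = f n z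
    exact congrArg (f n) (cast_eq _ z)
  | (k+1), h, z => by
    have h' : n+1+k = n+(k+1) := by omega
    show T n (k+1) (f (n+(k+1)) (cast (congrArg A h) z))
        = f n (T (n+1) k (f (n+1+k) z))
    rw [← transition_front n k h' (f (n+1+k) z)]
    congr 1
    exact cast_f f h' z

lemma T_congr (b : ∀ m, A m) (n : ℕ) {k k' : ℕ} (h : k = k') :
    T n k (b (n+k)) = T n k' (b (n+k')) := by subst h; rfl

lemma front_apply (b : ∀ m, A m) (n i : ℕ) :
    f n (T (n+1) i (b (n+1+i))) = T n (i+1) (b (n+(i+1))) := by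
  have h : n+1+i = n+(i+1) := by omega
  rw [← transition_front f n i h (b (n+1+i))]
  congr 1
  exact cast_pi b h

lemma surj_of_ML
    (hML : ∀ n : ℕ, ∃ j : ℕ, ∀ l : ℕ, (T n (j + l)).range = (T n j).range) :
    Function.Surjective
      (fun a : ∀ n, A n => (fun n => a n - f n (a (n + 1)) : ∀ n, A n)) := by
  intro b
  choose J hJ using hML
  have B_eq : ∀ n k, J n ≤ k → (T n k).range = (T n (J n)).range := by
    intro n k hk
    obtain ⟨l, rfl⟩ := Nat.exists_eq_add_of_le hk
    exact hJ n l
  have B_surj : ∀ n (x : A n), x ∈ (T n (J n)).range →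
      ∃ y, y ∈ (T (n+1) (J (n+1))).range ∧ f n y = x := by
    intro n x hx
    set m := max (J n) (J (n+1)) with hm
    have hx' : x ∈ (T n (m+1)).range := by
      rw [B_eq n (m+1) (le_trans (le_max_left _ _) (Nat.le_succ _))]
      exact hx
    obtain ⟨z, hz⟩ := hx'
    have hnm : n+1+m = n+(m+1) := by omega
    refine ⟨T (n+1) m (cast (congrArg A hnm.symm) z), ?_, ?_⟩
    · rw [← B_eq (n+1) m (le_max_right _ _)]
      exact ⟨_, rfl⟩
    · rw [← transition_front f n m hnm _, cast_symm_cast hnm]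
      exact hz
  -- monotone cutoff
  let M : ℕ → ℕ := fun n => Nat.rec (J 0 + 1) (fun n Mn => max (J (n+1) + 1) Mn) n
  have hMJ : ∀ n, J n + 1 ≤ M n := by
    intro n; cases n with
    | zero => exact le_rfl
    | succ n => exact le_max_left _ _
  have hMmono : ∀ n, M n ≤ M (n+1) := fun n => le_max_right _ _
  have hM1 : ∀ n, 1 ≤ M n := fun n => le_trans (Nat.le_add_left 1 (J n)) (hMJ n)
  -- partial sums
  have hfv : ∀ n, f n (∑ i ∈ Finset.range (M (n+1)), T (n+1) i (b (n+1+i)))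
      = ∑ i ∈ Finset.Ico 1 (M (n+1) + 1), T n i (b (n+i)) := by
    intro n
    rw [Finset.sum_Ico_eq_sum_range]
    simp only [Nat.add_sub_cancel]
    rw [map_sum]
    apply Finset.sum_congr rfl
    intro i _
    rw [front_apply f b n i]
    exact (T_congr f b n (by omega : i + 1 = 1 + i))
  have hvsplit : ∀ n, (∑ i ∈ Finset.range (M n), T n i (b (n+i)))
      = b n + ∑ i ∈ Finset.Ico 1 (M n), T n i (b (n+i)) := by
    intro n
    rw [Finset.range_eq_Ico,
      ← Finset.sum_Ico_consecutive _ (Nat.zero_le 1) (hM1 n)]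
    congr 1
    rw [Finset.sum_Ico_eq_sum_range]
    simp
    rfl
  have key : ∀ n, (∑ i ∈ Finset.range (M n), T n i (b (n+i)))
      - f n (∑ i ∈ Finset.range (M (n+1)), T (n+1) i (b (n+1+i))) - b n
      ∈ (T n (J n)).range := by
    intro n
    have hsplit : (∑ i ∈ Finset.Ico 1 (M (n+1) + 1), T n i (b (n+i)))
        = (∑ i ∈ Finset.Ico 1 (M n), T n i (b (n+i)))
          + ∑ i ∈ Finset.Ico (M n) (M (n+1) + 1), T n i (b (n+i)) :=
      (Finset.sum_Ico_consecutive _ (hM1 n)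
        (le_trans (hMmono n) (Nat.le_succ _))).symm
    rw [hfv, hsplit, hvsplit]
    have : ∀ x y z : A n, x + y - (y + z) - x = -z := by intro x y z; abel
    rw [this]
    apply neg_mem
    apply sum_mem
    intro i hi
    simp only [Finset.mem_Ico] at hi
    apply range_le' f n (show J n ≤ i by have := hMJ n; omega)
    exact ⟨b (n+i), rfl⟩
  -- solve the stable subsystem
  have step : ∀ n (x : A n), x ∈ (T n (J n)).range →
      {y : A (n+1) // y ∈ (T (n+1) (J (n+1))).range ∧ f n y = x} := by
    intro n x hx
    have := B_surj n x hx
    exact Classical.indefiniteDescription _ (by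
      obtain ⟨y, h1, h2⟩ := this; exact ⟨y, h1, h2⟩)
  let r : ∀ n, A n := fun n =>
    (∑ i ∈ Finset.range (M n), T n i (b (n+i)))
      - f n (∑ i ∈ Finset.range (M (n+1)), T (n+1) i (b (n+1+i))) - b n
  let u : ∀ n, {x : A n // x ∈ (T n (J n)).range} := fun n =>
    Nat.rec ⟨0, zero_mem _⟩
      (fun n p => ⟨(step n (p.1 - r n) (sub_mem p.2 (key n))).1,
        (step n (p.1 - r n) (sub_mem p.2 (key n))).2.1⟩) n
  have hu : ∀ n, f n (u (n+1)).1 = (u n).1 - r n := by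
    intro n
    exact (step n ((u n).1 - r n) (sub_mem (u n).2 (key n))).2.2
  refine ⟨fun n => (∑ i ∈ Finset.range (M n), T n i (b (n+i))) - (u n).1, ?_⟩
  funext n
  show (∑ i ∈ Finset.range (M n), T n i (b (n+i))) - (u n).1
      - f n ((∑ i ∈ Finset.range (M (n+1)), T (n+1) i (b (n+1+i))) - (u (n+1)).1) = b n
  rw [map_sub, hu]
  have hrn : r n = (∑ i ∈ Finset.range (M n), T n i (b (n+i)))
      - f n (∑ i ∈ Finset.range (M (n+1)), T (n+1) i (b (n+1+i))) - b n := rfl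
  rw [hrn]
  abel

lemma cast_dep (n : ℕ) {k k' : ℕ} (h : k = k') (z : A (n+k)) :
    T n k' (cast (congrArg A (congrArg (n + ·) h)) z) = T n k z := by subst h; rfl

lemma telescope (a b : ∀ n, A n) (hb : ∀ n, b n = a n - f n (a (n+1))) (n : ℕ) :
    ∀ k, a n = (∑ i ∈ Finset.range k, T n i (b (n+i))) + T n k (a (n+k)) := by
  intro k
  induction k with
  | zero => simp [InverseSystem.transition]
  | succ k ih =>
    rw [Finset.sum_range_succ]
    show a n = _ + T n (k+1) (a (n+(k+1)))
    have h1 : T n (k+1) (a (n+(k+1))) = T n k (f (n+k) (a (n+k+1))) := rfl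
    rw [h1, ih]
    have h2 : (T n k) (b (n+k)) + T n k (f (n+k) (a (n+k+1)))
        = T n k (a (n+k)) := by
      rw [← map_add]; congr 1; rw [hb (n+k)]; abel
    rw [add_assoc, h2]

lemma Tc_congr (n : ℕ) (c : ∀ k, A (n+k)) {k k' : ℕ} (h : k = k') :
    T n k (c k) = T n k' (c k') := by subst h; rfl

lemma ML_of_surj
    (hsurj : Function.Surjective
      (fun a : ∀ n, A n => (fun n => a n - f n (a (n + 1)) : ∀ n, A n)))
    [∀ n, Countable (A n)] :
    ∀ n : ℕ, ∃ j : ℕ, ∀ l : ℕ, (T n (j + l)).range = (T n j).range := by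
  intro n
  by_contra hns
  push_neg at hns
  classical
  -- step lemma
  have step : ∀ (k : ℕ) (s x : A n), ∃ k' s', k < k' ∧
      s' - s ∈ (T n k).range ∧ x - s' ∉ (T n k').range := by
    intro k s x
    obtain ⟨l, hl⟩ := hns k
    have hl0 : l ≠ 0 := by rintro rfl; exact hl rfl
    have hnle : ¬((T n k).range ≤ (T n (k+l)).range) := by
      intro hle
      exact hl (le_antisymm (range_le f n k l) hle)
    obtain ⟨w, hw1, hw2⟩ := SetLike.not_le_iff_exists.mp hnle
    by_cases hx : x - s ∈ (T n k).range
    · refine ⟨k + l, x - w, by omega, ?_, ?_⟩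
      · have h : x - w - s = (x - s) - w := by abel
        rw [h]; exact sub_mem hx hw1
      · have h : x - (x - w) = w := by abel
        rw [h]; exact hw2
    · refine ⟨k + l, s, by omega, by rw [sub_self]; exact zero_mem _, ?_⟩
      intro hmem
      exact hx (range_le f n k l hmem)
  -- enumerate A n
  obtain ⟨e, he⟩ := exists_surjective_nat (A n)
  -- recursive construction
  have step' : ∀ (j : ℕ) (p : ℕ × A n), {p' : ℕ × A n // p.1 < p'.1 ∧
      p'.2 - p.2 ∈ (T n p.1).range ∧ e j - p'.2 ∉ (T n p'.1).range} := by
    intro j p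
    have hstep := step p.1 p.2 (e j)
    exact Classical.indefiniteDescription _ (by
      obtain ⟨k', s', h1, h2, h3⟩ := hstep
      exact ⟨(k', s'), h1, h2, h3⟩)
  let P : ℕ → ℕ × A n := fun j => Nat.rec ((0 : ℕ), (0 : A n))
    (fun j p => (step' j p).1) j
  let K : ℕ → ℕ := fun j => (P j).1
  let S : ℕ → A n := fun j => (P j).2
  have hK : ∀ j, K j < K (j+1) := fun j => (step' j (P j)).2.1
  have hS : ∀ j, S (j+1) - S j ∈ (T n (K j)).range := fun j => (step' j (P j)).2.2.1
  have hE : ∀ j, e j - S (j+1) ∉ (T n (K (j+1))).range := fun j => (step' j (P j)).2.2.2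
  have hKmono : StrictMono K := strictMono_nat_of_lt_succ hK
  have hK0 : K 0 = 0 := rfl
  -- witnesses for increments
  have w : ∀ j, {z : A (n + K j) // T n (K j) z = S (j+1) - S j} := fun j =>
    Classical.indefiniteDescription _ (hS j)
  -- the sequence b
  let c : ∀ k, A (n + k) := fun k =>
    if h : ∃ j, K j = k then
      cast (congrArg A (congrArg (n + ·) h.choose_spec)) (w h.choose).1
    else 0
  have hcdef : ∀ k, c k = if h : ∃ j, K j = k then
      cast (congrArg A (congrArg (n + ·) h.choose_spec)) (w h.choose).1
    else 0 := fun _ => rfl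
  let b : ∀ m, A m := fun m =>
    if h : n ≤ m then cast (congrArg A (show n + (m - n) = m by omega)) (c (m - n))
    else 0
  have hbdef : ∀ m, b m = if h : n ≤ m then
      cast (congrArg A (show n + (m - n) = m by omega)) (c (m - n))
    else 0 := fun _ => rfl
  have hb : ∀ k, T n k (b (n + k)) = T n k (c k) := by
    intro k
    rw [hbdef (n+k), dif_pos (Nat.le_add_right n k)]
    have hk : n + k - n = k := by omega
    exact (cast_dep f n hk (c (n + k - n))).trans (Tc_congr f n c hk)
  have hcK : ∀ j, T n (K j) (c (K j)) = S (j+1) - S j := by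
    intro j
    have hex : ∃ j', K j' = K j := ⟨j, rfl⟩
    rw [hcdef (K j), dif_pos hex]
    have hj' : hex.choose = j := hKmono.injective hex.choose_spec
    rw [cast_dep f n hex.choose_spec (w hex.choose).1, (w hex.choose).2, hj']
  have hc0 : ∀ k, (¬∃ j, K j = k) → c k = 0 := by
    intro k h
    rw [hcdef k, dif_neg h]
  -- get a preimage
  obtain ⟨a, ha⟩ := hsurj b
  have hab : ∀ m, b m = a m - f m (a (m+1)) := fun m => (congrFun ha m).symm
  have htel := telescope f a b hab n
  -- partial sums at checkpoints
  have hsum : ∀ j, (∑ i ∈ Finset.range (K j), T n i (b (n+i))) = S j := by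
    intro j
    induction j with
    | zero => rw [hK0]; rfl
    | succ j ih =>
      rw [Finset.range_eq_Ico, ← Finset.sum_Ico_consecutive _
        (Nat.zero_le (K j)) (le_of_lt (hK j)), ← Finset.range_eq_Ico, ih]
      have hmid : (∑ i ∈ Finset.Ico (K j) (K (j+1)), T n i (b (n+i)))
          = S (j+1) - S j := by
        rw [Finset.sum_eq_single_of_mem (K j)
          (Finset.mem_Ico.mpr ⟨le_rfl, hK j⟩)]
        · rw [hb (K j)]; exact hcK j
        · intro i hi hne
          have hnotex : ¬∃ j', K j' = i := by
            rintro ⟨j', rfl⟩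
            simp only [Finset.mem_Ico] at hi
            rcases lt_or_ge j' (j+1) with h' | h'
            · exact absurd (hKmono.monotone (Nat.lt_succ_iff.mp h'))
                (by omega)
            · exact absurd (hKmono.monotone h') (by omega)
          rw [hb i, hc0 i hnotex, map_zero]
      rw [hmid]; abel
  -- contradiction
  obtain ⟨j, hj⟩ := he (a n)
  apply hE j
  have hT := htel (K (j+1))
  rw [hsum (j+1)] at hT
  refine ⟨a (n + K (j+1)), ?_⟩
  rw [hj, hT]; abel

end Lim1MLAux

/-- **Mittag-Leffler characterization of the vanishing of `lim¹`** for inverse sequences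
of countable abelian groups: the map `d : ∏ₙ Aₙ → ∏ₙ Aₙ`, `d(a)ₙ = aₙ − fₙ(a_{n+1})`,
is surjective (i.e. `lim¹ = 0`) if and only if the system is Mittag-Leffler: for every
`n` there is `m ≥ n` (written `m = n + j`) such that for every `k ≥ m`
(written `k = n + (j + l)`) the image of `A k → A n` equals the image of `A m → A n`. -/
theorem lim1_vanishes_iff_mittagLeffler (A : ℕ → Type) [∀ n, AddCommGroup (A n)]
    [∀ n, Countable (A n)] (f : ∀ n, A (n + 1) →+ A n) :
    Function.Surjective
        (fun a : ∀ n, A n => (fun n => a n - f n (a (n + 1)) : ∀ n, A n)) ↔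
      ∀ n : ℕ, ∃ j : ℕ, ∀ l : ℕ,
        (InverseSystem.transition A f n (j + l)).range =
          (InverseSystem.transition A f n j).range := by
  exact ⟨fun h => Lim1MLAux.ML_of_surj f h, fun h => Lim1MLAux.surj_of_ML f h⟩
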